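/- Let q ≥ 4 be an integer, ε ∈ (0, 1/2], n ≥ 1, and let ρ ≥ 1 be a real number such that α_ε^{1/ρ} ≤ 1/2 if q is even, and α_ε^{1/ρ} ≤ 1/(2 cos(π/q)) if q is odd. Then the minimum of Qⁿ(ρ, P) over all probability mass functions P on (ZMod q)ⁿ equals ((1 + 2 α_ε^{1/ρ})/q)ⁿ; equivalently, E_x^n(ρ) := −(ρ/n) log₂ min_P Qⁿ(ρ, P) = ρ log₂( q/(1 + 2 α_ε^{1/ρ}) ). -/

import Mathlib

/-- The typewriter channel transition probabilities on `ZMod q`. -/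
noncomputable def W (q : ℕ) (ε : ℝ) (y x : ZMod q) : ℝ :=
  if y = x then 1 - ε else if y = x + 1 then ε else 0

/-- `α_ε = √(ε(1-ε))`. -/
noncomputable def alphaE (ε : ℝ) : ℝ := Real.sqrt (ε * (1 - ε))

/-- Single-letter Bhattacharyya kernel `g₁(a,b) = Σ_y √(W(y|a) W(y|b))`. -/
noncomputable def g1 (q : ℕ) [NeZero q] (ε : ℝ) (a b : ZMod q) : ℝ :=
  ∑ y : ZMod q, Real.sqrt (W q ε y a * W q ε y b)

/-- `gₙ(x,x') = ∏ₖ g₁(xₖ, x'ₖ)`. -/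
noncomputable def gn (q : ℕ) [NeZero q] (n : ℕ) (ε : ℝ) (x x' : Fin n → ZMod q) : ℝ :=
  ∏ k, g1 q ε (x k) (x' k)

/-- The quadratic form `Qⁿ(ρ, P) = Σ_{x,x'} P(x)P(x') gₙ(x,x')^{1/ρ}`
(real `rpow`, so `0^{1/ρ} = 0` for `ρ ≥ 1`). -/
noncomputable def Qn (q : ℕ) [NeZero q] (n : ℕ) (ε ρ : ℝ)
    (P : (Fin n → ZMod q) → ℝ) : ℝ :=
  ∑ x : Fin n → ZMod q, ∑ x' : Fin n → ZMod q,
    P x * P x' * (gn q n ε x x') ^ (1 / ρ)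

/-!
Put `β = α_ε^{1/ρ}`. Letter by letter, `g₁^{1/ρ}` is the circulant matrix `A = I + β (S + S⁻¹)`
on `ZMod q` (`S` the cyclic shift), and `Qⁿ(ρ, P)` is the quadratic form of its `n`-fold Kronecker
power. The eigenvalues of `A` are `1 + 2β cos (2πj/q)`, which the hypothesis on `β` makes nonnegative, and
`A` has constant row sums `1 + 2β`; hence `A ⪰ t J` with `t = (1 + 2β)/q` and `J` the all-ones
matrix. By the Schur product theorem `A^{⊗n} ⪰ tⁿ J^{⊗n}`, so `Qⁿ(ρ, P) ≥ tⁿ (∑ P)² = tⁿ`, and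
the uniform distribution attains `tⁿ`.
-/

open Finset Real ComplexConjugate

namespace Matrix

variable {α ι : Type*}

/-- The Kronecker power of `M` over the coordinates in `S`, viewed as a kernel on all of `ι → α`. -/
def piKernel (M : Matrix α α ℝ) (S : Finset ι) : Matrix (ι → α) (ι → α) ℝ :=
  of fun x x' => ∏ k ∈ S, M (x k) (x' k)

lemma posSemidef_allOnes {β : Type*} [Finite β] :
    (of fun _ _ => 1 : Matrix β β ℝ).PosSemidef := by
  simpa [vecMulVec] using posSemidef_vecMulVec_self_star (fun _ : β => (1 : ℝ))

variable [DecidableEq ι] {M : Matrix α α ℝ}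

lemma piKernel_insert {k : ι} {S : Finset ι} (hk : k ∉ S) :
    piKernel M (insert k S) = M.submatrix (· k) (· k) ⊙ piKernel M S := by
  ext x x'
  simp [piKernel, prod_insert hk]

lemma PosSemidef.piKernel [Finite α] [Finite ι] (hM : M.PosSemidef) (S : Finset ι) :
    (piKernel M S).PosSemidef := by
  induction S using Finset.induction_on with
  | empty => simpa [Matrix.piKernel] using posSemidef_allOnes
  | insert k S hk ih => rw [piKernel_insert hk]; exact (hM.submatrix _).hadamard ih

lemma posSemidef_piKernel_sub [Finite α] [Finite ι] {t : ℝ} (ht : 0 ≤ t)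
    (hM : (M - t • of fun _ _ => 1).PosSemidef) (S : Finset ι) :
    (piKernel M S - t ^ #S • of fun _ _ => 1).PosSemidef := by
  have hM' : M.PosSemidef := by simpa using hM.add (posSemidef_allOnes.smul ht)
  induction S using Finset.induction_on with
  | empty => simpa [Matrix.piKernel] using PosSemidef.zero
  | insert k S hk ih =>
    have h : piKernel M (insert k S) - t ^ #(insert k S) • (of fun _ _ => 1)
        = (M - t • of fun _ _ => 1).submatrix (· k) (· k) ⊙ piKernel M S
          + t • (piKernel M S - t ^ #S • of fun _ _ => 1) := by
      ext x x'
      simp [Matrix.piKernel, prod_insert hk, card_insert_of_notMem hk]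
      ring
    rw [h]
    exact ((hM.submatrix _).hadamard (hM'.piKernel S)).add (ih.smul ht)

lemma star_dotProduct_mulVec_eq_sum_sum [Fintype α] (A : Matrix α α ℝ) (f : α → ℝ) :
    star f ⬝ᵥ A *ᵥ f = ∑ a, ∑ b, f a * f b * A a b := by
  simp only [dotProduct, mulVec, Pi.star_apply, star_trivial, mul_sum]
  exact sum_congr rfl fun a _ => sum_congr rfl fun b _ => by ring

lemma PosSemidef.sum_sum_mul_nonneg [Fintype α] {A : Matrix α α ℝ} (hA : A.PosSemidef)
    (f : α → ℝ) : 0 ≤ ∑ a, ∑ b, f a * f b * A a b :=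
  star_dotProduct_mulVec_eq_sum_sum A f ▸ hA.dotProduct_mulVec_nonneg f

variable [Fintype α] [Fintype ι]

lemma sum_sum_prod_eq_pow {r : ℝ} (hM : ∀ a, ∑ b, M a b = r) :
    ∑ x : ι → α, ∑ x' : ι → α, ∏ k, M (x k) (x' k) = (Fintype.card α * r) ^ Fintype.card ι := by
  have hrow (x : ι → α) : ∑ x' : ι → α, ∏ k, M (x k) (x' k) = r ^ Fintype.card ι := by
    rw [← Fintype.prod_sum (fun k b => M (x k) b)]
    simp [hM]
  simp [hrow, mul_pow]

lemma pow_le_sum_sum_mul_prod {t : ℝ} (ht : 0 ≤ t) (hM : (M - t • of fun _ _ => 1).PosSemidef)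
    (f : (ι → α) → ℝ) (hf : ∑ x, f x = 1) :
    t ^ Fintype.card ι ≤ ∑ x, ∑ x', f x * f x' * ∏ k, M (x k) (x' k) := by
  have := (posSemidef_piKernel_sub ht hM univ).sum_sum_mul_nonneg f
  simp only [piKernel, sub_apply, smul_apply, of_apply, mul_sub, sum_sub_distrib] at this
  simpa only [← sum_mul, ← mul_sum, hf, mul_one, one_mul, sub_nonneg, smul_eq_mul, card_univ]
    using this

end Matrix

lemma neg_cos_pi_div_le_cos_two_pi_mul_div {q m : ℕ} (hq : Odd q) (hm : m < q) :
    -cos (π / q) ≤ cos (2 * π * m / q) := by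
  have hq0 : (0 : ℝ) < q := by exact_mod_cast hq.pos
  have hq2 := Nat.odd_iff.mp hq
  set z : ℤ := q - 2 * m
  have hz1 : (1 : ℝ) ≤ |(z : ℝ)| := by exact_mod_cast Int.one_le_abs (by omega)
  have hzq : |(z : ℝ)| ≤ q := by exact_mod_cast abs_le.mpr ⟨by omega, by omega⟩
  have hθ : |π - 2 * π * m / q| = π / q * |(z : ℝ)| := by
    rw [← abs_of_pos (div_pos pi_pos hq0), ← abs_mul]
    congr 1
    simp only [z]; push_cast; field_simp
  have hcos : cos (π - 2 * π * m / q) ≤ cos (π / q) := by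
    rw [← cos_abs, hθ]
    apply cos_le_cos_of_nonneg_of_le_pi (by positivity)
    · calc π / q * |(z : ℝ)| ≤ π / q * q := by gcongr
        _ = π := by field_simp
    · exact le_mul_of_one_le_right (by positivity) hz1
  rw [cos_pi_sub] at hcos
  linarith

lemma one_add_two_mul_cos_nonneg {q : ℕ} (hq : 2 < q) {β : ℝ} (hβ : 0 ≤ β)
    (heven : Even q → β ≤ 1 / 2) (hodd : Odd q → β ≤ 1 / (2 * cos (π / q)))
    {m : ℕ} (hm : m < q) : 0 ≤ 1 + 2 * β * cos (2 * π * m / q) := by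
  rcases Nat.even_or_odd q with hq' | hq'
  · nlinarith [neg_one_le_cos (2 * π * m / q), heven hq']
  · have hpos : 0 < cos (π / q) := by
      apply cos_pos_of_mem_Ioo ⟨by linarith [pi_pos, div_pos pi_pos (by positivity : (0:ℝ) < q)], ?_⟩
      rw [div_lt_div_iff_of_pos_left pi_pos (by positivity) two_pos]
      exact_mod_cast hq
    have hβ' : 2 * β * cos (π / q) ≤ 1 := by
      have := hodd hq'
      rw [le_div_iff₀ (by positivity)] at this
      linarith
    nlinarith [neg_cos_pi_div_le_cos_two_pi_mul_div hq' hm]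

namespace ZMod

variable {q : ℕ} [NeZero q]

lemma stdAddChar_neg (y : ZMod q) : stdAddChar (-y) = conj (stdAddChar y) := by
  rw [stdAddChar_apply, stdAddChar_apply, AddChar.map_neg_eq_inv, Circle.coe_inv_eq_conj]

lemma sum_stdAddChar_mul (e : ZMod q) :
    ∑ j, stdAddChar (j * e) = if e = 0 then (q : ℂ) else 0 := by
  simpa using AddChar.sum_mulShift e (isPrimitive_stdAddChar q)

lemma re_stdAddChar (j : ZMod q) :
    (stdAddChar j).re = cos (2 * π * j.val / q) := by
  rw [stdAddChar_apply, toCircle_apply]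
  convert Complex.exp_ofReal_mul_I_re (2 * π * j.val / q) using 2
  push_cast; ring_nf

lemma natCast_mul_sum_sum_mul_sub_eq (c x : ZMod q → ℝ) :
    (q : ℂ) * ((∑ a, ∑ b, x a * x b * c (a - b) : ℝ) : ℂ)
      = ∑ j, (∑ d, (c d : ℂ) * stdAddChar (j * d)) *
          ((∑ a, (x a : ℂ) * stdAddChar (-(j * a))) *
            conj (∑ a, (x a : ℂ) * stdAddChar (-(j * a)))) := by
  have hchar (j a b d : ZMod q) : stdAddChar (j * d) * stdAddChar (-(j * a)) * stdAddChar (j * b)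
      = stdAddChar (j * (d - (a - b))) := by
    rw [← AddChar.map_add_eq_mul, ← AddChar.map_add_eq_mul]; ring_nf
  have horth (a b : ZMod q) : ∑ d, ∑ j, (c d : ℂ) * stdAddChar (j * (d - (a - b)))
      = q * c (a - b) := by
    simp_rw [← mul_sum, sum_stdAddChar_mul, sub_eq_zero, mul_ite, mul_zero, sum_ite_eq', mem_univ,
      if_true, mul_comm]
  calc (q : ℂ) * ((∑ a, ∑ b, x a * x b * c (a - b) : ℝ) : ℂ)
      = ∑ a, ∑ b, (x a : ℂ) * x b * ∑ d, ∑ j, (c d : ℂ) * stdAddChar (j * (d - (a - b))) := by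
        push_cast
        rw [mul_sum]
        refine sum_congr rfl fun a _ => ?_
        rw [mul_sum]
        refine sum_congr rfl fun b _ => ?_
        rw [horth]
        ring
    _ = ∑ j, ∑ a, ∑ b, ∑ d, (c d : ℂ) * x a * x b * stdAddChar (j * (d - (a - b))) := by
        simp_rw [mul_sum]
        conv_rhs => rw [sum_comm]; enter [2, a]; rw [sum_comm]; enter [2, b]; rw [sum_comm]
        exact sum_congr rfl fun a _ => sum_congr rfl fun b _ => sum_congr rfl fun d _ =>
          sum_congr rfl fun j _ => by ring
    _ = _ := by
        simp only [map_sum, map_mul, Complex.conj_ofReal, ← stdAddChar_neg, neg_neg, sum_mul,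
          mul_sum]
        refine sum_congr rfl fun j _ => ?_
        rw [sum_comm]
        exact sum_congr rfl fun a _ => sum_congr rfl fun b _ => sum_congr rfl fun d _ => by
          rw [← hchar]; ring

end ZMod

namespace Matrix

variable {q : ℕ} [NeZero q]

lemma posSemidef_circulant_of_re_fourier_nonneg {c : ZMod q → ℝ} (hc : ∀ d, c (-d) = c d)
    (hc' : ∀ j, 0 ≤ (∑ d, (c d : ℂ) * ZMod.stdAddChar (j * d)).re) :
    (circulant c).PosSemidef := by
  refine .of_dotProduct_mulVec_nonneg ?_ fun x => ?_
  · ext a b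
    simp [circulant_apply, ← hc (a - b)]
  · rw [star_dotProduct_mulVec_eq_sum_sum]
    simp only [circulant_apply]
    have h := congrArg Complex.re (ZMod.natCast_mul_sum_sum_mul_sub_eq c x)
    simp only [Complex.mul_conj, Complex.re_sum, Complex.re_mul_ofReal, Complex.natCast_re] at h
    have hq : (0 : ℝ) < q := Nat.cast_pos.mpr (NeZero.pos q)
    refine nonneg_of_mul_nonneg_right ?_ hq
    rw [h]
    exact sum_nonneg fun j _ =>
      mul_nonneg (by simpa [Complex.re_sum] using hc' j) (Complex.normSq_nonneg _)

end Matrix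

lemma ZMod.two_ne_zero_of_two_lt {q : ℕ} (hq : 2 < q) : (2 : ZMod q) ≠ 0 := by
  have : ((2 : ℕ) : ZMod q) ≠ 0 := by
    rw [Ne, ZMod.natCast_eq_zero_iff]
    exact Nat.not_dvd_of_pos_of_lt two_pos hq
  exact_mod_cast this

lemma ZMod.one_ne_zero_of_two_lt {q : ℕ} (hq : 2 < q) : (1 : ZMod q) ≠ 0 := by
  have : Fact (1 < q) := ⟨by omega⟩
  exact one_ne_zero

def cycleKernel (q : ℕ) (β : ℝ) (d : ZMod q) : ℝ :=
  if d = 0 then 1 else if d = 1 ∨ d = -1 then β else 0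

section CycleKernel

variable {q : ℕ} (β : ℝ)

lemma sum_cycleKernel_smul [NeZero q] (hq : 2 < q) {M : Type*} [AddCommMonoid M] [Module ℝ M]
    (f : ZMod q → M) :
    ∑ d, cycleKernel q β d • f d = f 0 + β • (f 1 + f (-1)) := by
  have h1 := ZMod.one_ne_zero_of_two_lt hq
  have h2 := ZMod.two_ne_zero_of_two_lt hq
  have h1' : (1 : ZMod q) ≠ -1 := fun h => h2 (by linear_combination h)
  have hsplit (d : ZMod q) : cycleKernel q β d • f d = (if d = 0 then f 0 else 0)
      + (if d = 1 then β • f 1 else 0) + (if d = -1 then β • f (-1) else 0) := by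
    unfold cycleKernel
    by_cases hd0 : d = 0
    · subst hd0; simp [h1.symm, h1]
    by_cases hd1 : d = 1
    · subst hd1; simp [h1, h1']
    by_cases hd2 : d = -1
    · subst hd2; simp [h1, h1'.symm]
    simp [hd0, hd1, hd2]
  simp [hsplit, sum_add_distrib, smul_add, add_assoc]

lemma cycleKernel_neg (d : ZMod q) : cycleKernel q β (-d) = cycleKernel q β d := by
  simp only [cycleKernel, neg_eq_iff_eq_neg, neg_zero, neg_neg, or_comm]

lemma cycleKernel_rpow {r : ℝ} (hr : r ≠ 0) (d : ZMod q) :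
    cycleKernel q β d ^ r = cycleKernel q (β ^ r) d := by
  unfold cycleKernel
  split_ifs <;> simp [zero_rpow hr]

lemma cycleKernel_nonneg {β : ℝ} (hβ : 0 ≤ β) (d : ZMod q) : 0 ≤ cycleKernel q β d := by
  unfold cycleKernel
  split_ifs <;> linarith

lemma sum_circulant_cycleKernel [NeZero q] (hq : 2 < q) (a : ZMod q) :
    ∑ b, Matrix.circulant (cycleKernel q β) a b = 1 + 2 * β := by
  simp_rw [Matrix.circulant_apply]
  rw [Fintype.sum_equiv (Equiv.subLeft a) (fun b => cycleKernel q β (a - b)) (cycleKernel q β)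
    fun _ => rfl]
  have h := sum_cycleKernel_smul β hq fun _ => (1 : ℝ)
  simp only [smul_eq_mul, mul_one] at h
  linarith

end CycleKernel

lemma W_add_add {q : ℕ} (ε : ℝ) (y x c : ZMod q) : W q ε (y + c) (x + c) = W q ε y x := by
  simp only [W, add_left_inj, add_right_comm x c 1]

lemma g1_eq_cycleKernel {q : ℕ} [NeZero q] (hq : 2 < q) {ε : ℝ} (hε₀ : 0 ≤ ε) (hε₁ : ε ≤ 1)
    (a b : ZMod q) : g1 q ε a b = cycleKernel q (alphaE ε) (a - b) := by
  have h1 := ZMod.one_ne_zero_of_two_lt hq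
  have h2 := ZMod.two_ne_zero_of_two_lt hq
  have hshift : g1 q ε a b = ∑ y, √(W q ε y (a - b) * W q ε y 0) := by
    rw [g1, ← Equiv.sum_comp (Equiv.addRight b)]
    simp_rw [Equiv.coe_addRight, ← W_add_add ε _ (a - b) b, ← W_add_add ε _ 0 b, sub_add_cancel,
      zero_add]
  rw [hshift, Fintype.sum_eq_add 0 1 h1.symm]
  · have hW0 : W q ε 0 0 = 1 - ε := by simp [W]
    have hW1 : W q ε 1 0 = ε := by simp [W, h1]
    have h1' : (1 : ZMod q) ≠ -1 := fun h => h2 (by linear_combination h)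
    rw [hW0, hW1, cycleKernel, alphaE]
    generalize a - b = d
    by_cases hd0 : d = 0
    · subst hd0
      rw [hW0, hW1, sqrt_mul_self (by linarith), sqrt_mul_self hε₀]
      simp
    by_cases hd1 : d = 1
    · subst hd1
      have h1'' : (0 : ZMod q) ≠ 1 + 1 := fun h => h2 (by linear_combination -h)
      simp [W, h1, h1.symm, h1'', mul_comm]
    by_cases hd2 : d = -1
    · subst hd2
      simp [W, h1', h1'.symm, h1]
    have hd2' : (0 : ZMod q) ≠ d + 1 := fun h => hd2 (by linear_combination -h)
    have hd0' : (1 : ZMod q) ≠ d + 1 := fun h => hd0 (by linear_combination -h)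
    simp [W, hd0, hd1, hd2, hd2', hd0', Ne.symm hd0, Ne.symm hd1]
  · rintro y ⟨hy0, hy1⟩
    simp [W, hy0, hy1]

lemma posSemidef_circulant_cycleKernel_sub {q : ℕ} [NeZero q] (hq : 2 < q) {β : ℝ}
    (hcos : ∀ m < q, 0 ≤ 1 + 2 * β * cos (2 * π * m / q)) :
    (Matrix.circulant (cycleKernel q β)
      - ((1 + 2 * β) / q) • Matrix.of fun _ _ => 1).PosSemidef := by
  have hshift : Matrix.circulant (cycleKernel q β) - ((1 + 2 * β) / q) • Matrix.of (fun _ _ => 1)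
      = Matrix.circulant fun d => cycleKernel q β d - (1 + 2 * β) / q := by
    ext a b; simp [Matrix.circulant_apply]
  rw [hshift]
  refine Matrix.posSemidef_circulant_of_re_fourier_nonneg (fun d => by rw [cycleKernel_neg])
    fun j => ?_
  -- the shift by `(1 + 2β)/q` cancels exactly the `j = 0` coefficient `1 + 2β`
  have hsum : ∑ d, ((cycleKernel q β d - (1 + 2 * β) / q : ℝ) : ℂ) * ZMod.stdAddChar (j * d)
      = 1 + β * (ZMod.stdAddChar j + ZMod.stdAddChar (-j))
        - (1 + 2 * β) / q * if j = 0 then (q : ℂ) else 0 := by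
    push_cast
    simp_rw [sub_mul, sum_sub_distrib, ← Complex.real_smul,
      sum_cycleKernel_smul β hq, ← mul_sum, mul_comm j, ZMod.sum_stdAddChar_mul]
    simp
  rw [hsum]
  split_ifs with hj
  · subst hj
    have hq0 : (q : ℂ) ≠ 0 := Nat.cast_ne_zero.mpr (NeZero.ne q)
    simp [hq0]
    linarith
  · simp only [Complex.add_re, Complex.one_re, Complex.re_ofReal_mul, mul_zero, sub_zero,
      ZMod.stdAddChar_neg, Complex.conj_re, ZMod.re_stdAddChar]
    linarith [hcos j.val (ZMod.val_lt j)]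

lemma Qn_eq_sum_sum_prod_circulant {q : ℕ} [NeZero q] (hq : 2 < q) (n : ℕ) {ε ρ : ℝ}
    (hε₀ : 0 ≤ ε) (hε₁ : ε ≤ 1) (hρ : ρ ≠ 0) (P : (Fin n → ZMod q) → ℝ) :
    Qn q n ε ρ P = ∑ x, ∑ x', P x * P x' *
      ∏ k, Matrix.circulant (cycleKernel q (alphaE ε ^ (1 / ρ))) (x k) (x' k) := by
  have hα : 0 ≤ alphaE ε := sqrt_nonneg _
  unfold Qn gn
  refine sum_congr rfl fun x _ => sum_congr rfl fun x' _ => ?_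
  rw [← finsetProd_rpow _ _ fun k _ => (g1_eq_cycleKernel hq hε₀ hε₁ _ _).symm ▸
    cycleKernel_nonneg hα _]
  simp only [g1_eq_cycleKernel hq hε₀ hε₁, cycleKernel_rpow _ (one_div_ne_zero hρ),
    Matrix.circulant_apply]

theorem stmt0 (q n : ℕ) [NeZero q] (hq : 4 ≤ q)
    (ε ρ : ℝ) (hε : 0 < ε) (hε' : ε ≤ 1 / 2) (hρ : 1 ≤ ρ)
    (heven : Even q → alphaE ε ^ (1 / ρ) ≤ 1 / 2)
    (hodd : Odd q → alphaE ε ^ (1 / ρ) ≤ 1 / (2 * Real.cos (Real.pi / q))) :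
    IsLeast
      {v : ℝ | ∃ P : (Fin n → ZMod q) → ℝ,
        (∀ x, 0 ≤ P x) ∧ (∑ x, P x = 1) ∧ v = Qn q n ε ρ P}
      (((1 + 2 * alphaE ε ^ (1 / ρ)) / q) ^ n) := by
  have hq2 : 2 < q := by omega
  have hQ := Qn_eq_sum_sum_prod_circulant hq2 n hε.le (by linarith) (by positivity : ρ ≠ 0)
  set β := alphaE ε ^ (1 / ρ)
  have hβ : 0 ≤ β := rpow_nonneg (sqrt_nonneg _) _
  refine ⟨⟨fun _ => ((q : ℝ) ^ n)⁻¹, fun _ => by positivity, by simp, ?_⟩, ?_⟩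
  · rw [hQ]
    simp_rw [← mul_sum]
    rw [Matrix.sum_sum_prod_eq_pow (sum_circulant_cycleKernel β hq2)]
    simp [div_pow, mul_pow]
    field_simp
  · rintro v ⟨P, -, hP, rfl⟩
    rw [hQ]
    simpa using Matrix.pow_le_sum_sum_mul_prod (by positivity)
      (posSemidef_circulant_cycleKernel_sub hq2
        fun m hm => one_add_two_mul_cos_nonneg hq2 hβ heven hodd hm) P hP
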